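/- There is an absolute constant C > 0 such that for every smooth Y : ℝ × ℝ³ → ℝ³, every t ≥ 0 and every y ∈ ℝ³ with r = |y| > 0: |(t − r) ∂_t ∂_r Y| ≤ C ( |∂Y| + Σ_Z |∂ Z Y| + t |(∂_t² − Δ)Y| ) at the point (t,y), where ∂_r = (y/r)·∇ and the sum runs over Z ∈ {∂_t, ∂₁, ∂₂, Ω̃₁, Ω̃₂, Ω̃₃, S̃}. -/

import Mathlib

/-!
STATEMENT 15: Pointwise estimate (C-10):
|(t − r)∂_t∂_r Y| ≤ C ( |∂Y| + Σ_Z |∂ Z Y| + t |(∂_t² − Δ)Y| ),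
where ∂_r = (y/r)·∇ and Z ranges over {∂_t, ∂₁, ∂₂, Ω̃₁, Ω̃₂, Ω̃₃, S̃}.
-/

noncomputable section

namespace Stmt15

abbrev Pt : Type := EuclideanSpace ℝ (Fin 3)

/-- Scalar space-time functions. -/
abbrev STF : Type := ℝ → Pt → ℝ

/-- ℝ³-valued space-time functions. -/
abbrev STV : Type := ℝ → Pt → Fin 3 → ℝ

def pd (j : Fin 3) (f : Pt → ℝ) : Pt → ℝ :=
  fun x => fderiv ℝ f x (EuclideanSpace.single j 1)

/-- Time derivative ∂_t. -/
def Dt (f : STF) : STF := fun t x => deriv (fun s => f s x) t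

/-- Spatial derivative ∂_j. -/
def Dsp (j : Fin 3) (f : STF) : STF := fun t x => pd j (f t) x

/-- All space-time first derivatives ∂ = (∂_t, ∂₁, ∂₂, ∂₃). -/
def Dst : Fin 4 → STF → STF := ![Dt, Dsp 0, Dsp 1, Dsp 2]

/-- The wave operator ∂_t² − Δ. -/
def Box (f : STF) : STF := fun t x => Dt (Dt f) t x - ∑ j, Dsp j (Dsp j f) t x

/-- The rotation operators Ω = y ∧ ∇ : Ωᵢ = y_{i+1}∂_{i+2} − y_{i+2}∂_{i+1} (cyclic). -/
def Om (i : Fin 3) (f : STF) : STF :=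
  fun t x => x (i+1) * Dsp (i+2) f t x - x (i+2) * Dsp (i+1) f t x

/-- The scaling operator S = t∂_t + r∂_r = t∂_t + Σ_j y_j ∂_j. -/
def Sc (f : STF) : STF := fun t x => t * Dt f t x + ∑ j, x j * Dsp j f t x

/-- The matrices U₁, U₂, U₃. -/
def Umat : Fin 3 → Matrix (Fin 3) (Fin 3) ℝ :=
  ![!![0,0,0; 0,0,1; 0,-1,0], !![0,0,-1; 0,0,0; 1,0,0], !![0,1,0; -1,0,0; 0,0,0]]

/-- Componentwise application of a scalar operator to a vector field. -/
def mapc (T : STF → STF) (Y : STV) : STV := fun t x i => T (fun s y => Y s y i) t x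

/-- The modified rotations Ω̃ᵢY = ΩᵢY + UᵢY. -/
def OmT (i : Fin 3) (Y : STV) : STV :=
  fun t x j => Om i (fun s y => Y s y j) t x + ∑ k, Umat i j k * Y t x k

/-- The modified scaling S̃Y = (S − 1)Y. -/
def ScT (Y : STV) : STV := fun t x j => Sc (fun s y => Y s y j) t x - Y t x j

/-- The seven generators {∂_t, ∂₁, ∂₂, Ω̃₁, Ω̃₂, Ω̃₃, S̃} acting on vector fields. -/
def Gen : Fin 7 → STV → STV :=
  ![mapc Dt, mapc (Dsp 0), mapc (Dsp 1), OmT 0, OmT 1, OmT 2, ScT]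

/-- The radial derivative ∂_r = (y/r)·∇ on space-time functions. -/
def DrT (f : STF) : STF := fun t x => ∑ j, (x j / ‖x‖) * Dsp j f t x

/-- |∂W| : norm of the array of all first-order space-time derivatives of W. -/
def d1Norm (W : STV) (t : ℝ) (x : Pt) : ℝ :=
  Real.sqrt (∑ b : Fin 4, ∑ i, (Dst b (fun s y => W s y i) t x)^2)

/-!
Multiplying by `r (t + r)` turns the weight `t - r` into `t² - r²`. For each component `u` of `Y`,
`S̃ = t ∂_t + y·∇ - 1` and `Σ_k Ω_k² = r² Δ - (y·∇)² - y·∇` give the identity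
`(t² - r²) r ∂_t ∂_r u = t y·∇ (S̃u) - r² ∂_t (S̃u) + t r² □u + t Σ_k Ω_k (Ω_k u) + 2 t y·∇ u`,
in which every term is `r (t + r)` times a first derivative of `S̃u`, `Ω_k u` or `u`, or `t □u`.
Finally `Ω_k` of the `i`-th component of `Y` differs from `(Ω̃_k Y)_i` by `(U_k Y)_i`, whose
derivatives are bounded by `|∂Y|`.
-/

open Function Finset

section Calculus

variable {u : STF}

def dirDeriv (v : ℝ × Pt) (u : STF) : STF := fun t x => fderiv ℝ (uncurry u) (t, x) v

theorem Dt_eq_dirDeriv (hu : Differentiable ℝ (uncurry u)) : Dt u = dirDeriv (1, 0) u := by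
  funext t x
  exact ((hu (t, x)).hasFDerivAt.comp_hasDerivAt t
    ((hasDerivAt_id t).prodMk (hasDerivAt_const t x))).deriv

theorem Dsp_eq_dirDeriv (hu : Differentiable ℝ (uncurry u)) (j : Fin 3) :
    Dsp j u = dirDeriv (0, EuclideanSpace.single j 1) u := by
  funext t x
  have h := (hu (t, x)).hasFDerivAt.comp x ((hasFDerivAt_const t x).prodMk (hasFDerivAt_id x))
  change fderiv ℝ (uncurry u ∘ fun y => (t, y)) x _ = _
  rw [h.fderiv]
  simp [dirDeriv]

theorem contDiff_dirDeriv {n : WithTop ℕ∞} (hu : ContDiff ℝ (n + 1) (uncurry u)) (v : ℝ × Pt) :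
    ContDiff ℝ n (uncurry (dirDeriv v u)) :=
  (hu.fderiv_right le_rfl).clm_apply contDiff_const

theorem dirDeriv_comm (hu : ContDiff ℝ 2 (uncurry u)) (v w : ℝ × Pt) :
    dirDeriv v (dirDeriv w u) = dirDeriv w (dirDeriv v u) := by
  funext t x
  have hd : Differentiable ℝ (fderiv ℝ (uncurry u)) :=
    (hu.fderiv_right (m := 1) (by norm_num)).differentiable (by norm_num)
  have hflip : ∀ v, fderiv ℝ (fun q => fderiv ℝ (uncurry u) q v) (t, x) =
      (fderiv ℝ (fderiv ℝ (uncurry u)) (t, x)).flip v := fun v => by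
    rw [fderiv_clm_apply (hd _) (differentiableAt_const v)]
    simp
  change fderiv ℝ (fun q => fderiv ℝ (uncurry u) q w) (t, x) v =
    fderiv ℝ (fun q => fderiv ℝ (uncurry u) q v) (t, x) w
  rw [hflip, hflip]
  exact hu.contDiffAt.isSymmSndFDerivAt (by simp) v w

theorem contDiff_Dt {n : WithTop ℕ∞} (hu : ContDiff ℝ (n + 1) (uncurry u)) :
    ContDiff ℝ n (uncurry (Dt u)) := by
  rw [Dt_eq_dirDeriv (hu.differentiable (by simp))]
  exact contDiff_dirDeriv hu _

theorem contDiff_Dsp {n : WithTop ℕ∞} (hu : ContDiff ℝ (n + 1) (uncurry u)) (j : Fin 3) :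
    ContDiff ℝ n (uncurry (Dsp j u)) := by
  rw [Dsp_eq_dirDeriv (hu.differentiable (by simp))]
  exact contDiff_dirDeriv hu _

theorem differentiable_Dt (hu : ContDiff ℝ 2 (uncurry u)) : Differentiable ℝ (uncurry (Dt u)) :=
  (contDiff_Dt (n := 1) hu).differentiable one_ne_zero

theorem differentiable_Dsp (hu : ContDiff ℝ 2 (uncurry u)) (j : Fin 3) :
    Differentiable ℝ (uncurry (Dsp j u)) :=
  (contDiff_Dsp (n := 1) hu j).differentiable one_ne_zero

theorem Dt_Dsp_comm (hu : ContDiff ℝ 2 (uncurry u)) (j : Fin 3) : Dt (Dsp j u) = Dsp j (Dt u) := by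
  have hu1 := hu.differentiable two_ne_zero
  rw [Dt_eq_dirDeriv (differentiable_Dsp hu j), Dsp_eq_dirDeriv (differentiable_Dt hu),
    Dt_eq_dirDeriv hu1, Dsp_eq_dirDeriv hu1, dirDeriv_comm hu]

theorem Dsp_Dsp_comm (hu : ContDiff ℝ 2 (uncurry u)) (j k : Fin 3) :
    Dsp j (Dsp k u) = Dsp k (Dsp j u) := by
  have hu1 := hu.differentiable two_ne_zero
  rw [Dsp_eq_dirDeriv (differentiable_Dsp hu k) j, Dsp_eq_dirDeriv (differentiable_Dsp hu j) k,
    Dsp_eq_dirDeriv hu1 k, Dsp_eq_dirDeriv hu1 j, dirDeriv_comm hu]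

theorem differentiable_of_uncurry_space (hu : Differentiable ℝ (uncurry u)) (t : ℝ) :
    Differentiable ℝ (u t) :=
  hu.comp ((differentiable_const t).prodMk differentiable_id)

theorem differentiable_of_uncurry_time (hu : Differentiable ℝ (uncurry u)) (x : Pt) :
    Differentiable ℝ (fun s => u s x) :=
  hu.comp (differentiable_id.prodMk (differentiable_const x))

end Calculus

section WaveIdentity

variable {u : STF}

theorem Dt_DrT (hu : ContDiff ℝ 2 (uncurry u)) (t : ℝ) (y : Pt) :
    Dt (DrT u) t y = ∑ j, y j / ‖y‖ * Dt (Dsp j u) t y := by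
  have h j := differentiable_of_uncurry_time (differentiable_Dsp hu j) y
  show deriv (fun s => ∑ j, y j / ‖y‖ * Dsp j u s y) t = _
  rw [deriv_fun_sum fun j _ => by fun_prop]
  simp [Dt]

theorem Dt_Sc_sub (hu : ContDiff ℝ 2 (uncurry u)) (t : ℝ) (y : Pt) :
    Dt (fun s z => Sc u s z - u s z) t y = t * Dt (Dt u) t y + ∑ k, y k * Dt (Dsp k u) t y := by
  have h := differentiable_of_uncurry_time (hu.differentiable two_ne_zero) y
  have ht := differentiable_of_uncurry_time (differentiable_Dt hu) y
  have hx k := differentiable_of_uncurry_time (differentiable_Dsp hu k) y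
  show deriv (fun s => s * Dt u s y + ∑ k, y k * Dsp k u s y - u s y) t = _
  rw [deriv_fun_sub (by fun_prop) (by fun_prop), deriv_fun_add (by fun_prop) (by fun_prop),
    deriv_fun_mul (by fun_prop) (by fun_prop), deriv_fun_sum fun k _ => by fun_prop]
  simp only [deriv_id'', Dt, one_mul, deriv_const_mul_field']
  ring

theorem Dsp_Sc_sub (hu : ContDiff ℝ 2 (uncurry u)) (j : Fin 3) (t : ℝ) (y : Pt) :
    Dsp j (fun s z => Sc u s z - u s z) t y =
      t * Dt (Dsp j u) t y + ∑ k, y k * Dsp j (Dsp k u) t y := by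
  have h := differentiable_of_uncurry_space (hu.differentiable two_ne_zero) t
  have ht := differentiable_of_uncurry_space (differentiable_Dt hu) t
  have hx k := differentiable_of_uncurry_space (differentiable_Dsp hu k) t
  show fderiv ℝ (fun z => t * Dt u t z + ∑ k, z k * Dsp k u t z - u t z) y _ = _
  rw [fderiv_fun_sub (by fun_prop) (by fun_prop), fderiv_fun_add (by fun_prop) (by fun_prop),
    fderiv_fun_sum fun k _ => by fun_prop]
  have hc (k : Fin 3) : DifferentiableAt ℝ (fun z : Pt => z k) y :=
    (PiLp.hasFDerivAt_apply 2 y k).differentiableAt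
  simp only [fderiv_const_mul (ht y), fderiv_fun_mul (hc _) (hx _ y),
    (PiLp.hasFDerivAt_apply (𝕜 := ℝ) 2 y _).fderiv, sub_apply,
    add_apply, smul_apply, smul_eq_mul,
    _root_.sum_apply, PiLp.proj_apply, PiLp.single_apply, mul_ite, mul_one, mul_zero,
    Dt_Dsp_comm hu, sum_add_distrib, sum_ite_eq', mem_univ, if_true]
  change t * Dsp j (Dt u) t y + (∑ k, y k * Dsp j (Dsp k u) t y + Dsp j u t y) - Dsp j u t y = _
  ring

theorem Dsp_Om (hu : ContDiff ℝ 2 (uncurry u)) (k j : Fin 3) (t : ℝ) (y : Pt) :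
    Dsp j (Om k u) t y =
      (EuclideanSpace.single j 1 : Pt) (k + 1) * Dsp (k + 2) u t y
        + y (k + 1) * Dsp j (Dsp (k + 2) u) t y
        - ((EuclideanSpace.single j 1 : Pt) (k + 2) * Dsp (k + 1) u t y
          + y (k + 2) * Dsp j (Dsp (k + 1) u) t y) := by
  have hx k := differentiable_of_uncurry_space (differentiable_Dsp hu k) t
  show fderiv ℝ (fun z => z (k + 1) * Dsp (k + 2) u t z - z (k + 2) * Dsp (k + 1) u t z) y _ = _
  rw [fderiv_fun_sub (by fun_prop) (by fun_prop), fderiv_fun_mul (by fun_prop) (by fun_prop),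
    fderiv_fun_mul (by fun_prop) (by fun_prop)]
  simp only [Dsp, pd, (PiLp.hasFDerivAt_apply (𝕜 := ℝ) 2 y _).fderiv,
    sub_apply, add_apply, smul_apply,
    smul_eq_mul, PiLp.proj_apply, PiLp.single_apply, mul_ite, mul_one, mul_zero, ite_mul, one_mul,
    zero_mul]
  ring

theorem wave_identity (hu : ContDiff ℝ 2 (uncurry u)) (t : ℝ) (y : Pt) :
    (t ^ 2 - ‖y‖ ^ 2) * ∑ j, y j * Dt (Dsp j u) t y =
      t * ∑ j, y j * Dsp j (fun s z => Sc u s z - u s z) t y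
        - ‖y‖ ^ 2 * Dt (fun s z => Sc u s z - u s z) t y
        + t * ‖y‖ ^ 2 * Box u t y
        + t * ∑ k, (y (k + 1) * Dsp (k + 2) (Om k u) t y - y (k + 2) * Dsp (k + 1) (Om k u) t y)
        + 2 * t * ∑ j, y j * Dsp j u t y := by
  have h01 : Dsp 0 (Dsp 1 u) t y = Dsp 1 (Dsp 0 u) t y := by rw [Dsp_Dsp_comm hu]
  have h02 : Dsp 0 (Dsp 2 u) t y = Dsp 2 (Dsp 0 u) t y := by rw [Dsp_Dsp_comm hu]
  have h12 : Dsp 1 (Dsp 2 u) t y = Dsp 2 (Dsp 1 u) t y := by rw [Dsp_Dsp_comm hu]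
  simp only [Dsp_Sc_sub hu, Dt_Sc_sub hu, Dsp_Om hu, Box, EuclideanSpace.real_norm_sq_eq,
    Fin.sum_univ_three, PiLp.single_apply, Fin.reduceAdd, Fin.reduceEq, if_true, if_false, h01, h02, h12]
  ring

end WaveIdentity

theorem abs_sum_le_card_mul {ι : Type*} [Fintype ι] {f : ι → ℝ} {K : ℝ} (hf : ∀ k, |f k| ≤ K) :
    |∑ k, f k| ≤ Fintype.card ι * K :=
  (abs_sum_le_sum_abs _ _).trans <| by
    simpa using sum_le_card_nsmul univ (fun k => |f k|) K fun k _ => hf k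

theorem abs_apply_mul_le {ι : Type*} [Fintype ι] (y : EuclideanSpace ℝ ι) (j : ι) {c K : ℝ}
    (hc : |c| ≤ K) : |y j * c| ≤ ‖y‖ * K := by
  rw [abs_mul]
  exact mul_le_mul (PiLp.norm_apply_le y j) hc (abs_nonneg _) (norm_nonneg _)

theorem abs_sum_mul_le {ι : Type*} [Fintype ι] (y : EuclideanSpace ℝ ι) {c : ι → ℝ} {K : ℝ}
    (hc : ∀ j, |c j| ≤ K) : |∑ j, y j * c j| ≤ Fintype.card ι * (‖y‖ * K) :=
  abs_sum_le_card_mul fun j => abs_apply_mul_le y j (hc j)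

theorem abs_le_sqrt_sum_sq {ι : Type*} [Fintype ι] (f : ι → ℝ) (i : ι) :
    |f i| ≤ √(∑ j, f j ^ 2) :=
  Real.abs_le_sqrt (single_le_sum (f := fun j => f j ^ 2) (fun _ _ => sq_nonneg _) (mem_univ i))

theorem sqrt_sum_sq_le_sum_abs {ι : Type*} [Fintype ι] (f : ι → ℝ) :
    √(∑ i, f i ^ 2) ≤ ∑ i, |f i| :=
  Real.sqrt_le_iff.mpr ⟨sum_nonneg fun _ _ => abs_nonneg _, by
    simpa only [sq_abs] using sum_sq_le_sq_sum_of_nonneg fun i _ => abs_nonneg (f i)⟩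

theorem abs_Dst_le_d1Norm (W : STV) (t : ℝ) (x : Pt) (b : Fin 4) (i : Fin 3) :
    |Dst b (fun s y => W s y i) t x| ≤ d1Norm W t x :=
  (abs_le_sqrt_sum_sq _ i).trans <| Real.sqrt_le_sqrt <|
    single_le_sum (f := fun b => ∑ i, Dst b (fun s y => W s y i) t x ^ 2)
      (fun _ _ => sum_nonneg fun _ _ => sq_nonneg _) (mem_univ b)

theorem abs_Dt_le_d1Norm (W : STV) (t : ℝ) (x : Pt) (i : Fin 3) :
    |Dt (fun s y => W s y i) t x| ≤ d1Norm W t x :=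
  abs_Dst_le_d1Norm W t x 0 i

theorem abs_Dsp_le_d1Norm (W : STV) (t : ℝ) (x : Pt) (j i : Fin 3) :
    |Dsp j (fun s y => W s y i) t x| ≤ d1Norm W t x := by
  fin_cases j
  exacts [abs_Dst_le_d1Norm W t x 1 i, abs_Dst_le_d1Norm W t x 2 i, abs_Dst_le_d1Norm W t x 3 i]

theorem abs_wave_identity_le {u : STF} (hu : ContDiff ℝ 2 (uncurry u)) {t : ℝ} {y : Pt}
    (ht : 0 ≤ t) {G G' M : ℝ}
    (hSt : |Dt (fun s z => Sc u s z - u s z) t y| ≤ G)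
    (hSx : ∀ j, |Dsp j (fun s z => Sc u s z - u s z) t y| ≤ G)
    (hOm : ∀ k j, |Dsp j (Om k u) t y| ≤ G') (hM : ∀ j, |Dsp j u t y| ≤ M) :
    |(t ^ 2 - ‖y‖ ^ 2) * ∑ j, y j * Dt (Dsp j u) t y| ≤
      (3 * G + 6 * G' + 6 * M + t * |Box u t y|) * (‖y‖ * (t + ‖y‖)) := by
  have hS : |∑ j, y j * Dsp j (fun s z => Sc u s z - u s z) t y| ≤ 3 * (‖y‖ * G) := by
    simpa using abs_sum_mul_le y hSx
  have hO : |∑ k, (y (k + 1) * Dsp (k + 2) (Om k u) t y - y (k + 2) * Dsp (k + 1) (Om k u) t y)|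
      ≤ 3 * (2 * (‖y‖ * G')) := by
    refine (abs_sum_le_card_mul (K := 2 * (‖y‖ * G')) fun k => ?_).trans_eq (by simp)
    linarith [abs_sub (y (k + 1) * Dsp (k + 2) (Om k u) t y) (y (k + 2) * Dsp (k + 1) (Om k u) t y),
      abs_apply_mul_le y (k + 1) (hOm k (k + 2)), abs_apply_mul_le y (k + 2) (hOm k (k + 1))]
  have hU : |∑ j, y j * Dsp j u t y| ≤ 3 * (‖y‖ * M) := by simpa using abs_sum_mul_le y hM
  have hG : 0 ≤ G := (abs_nonneg _).trans hSt
  have hG' : 0 ≤ G' := (abs_nonneg _).trans (hOm 0 0)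
  have hM0 : 0 ≤ M := (abs_nonneg _).trans (hM 0)
  have tri (a b c d e : ℝ) : |a - b + c + d + e| ≤ |a| + |b| + |c| + |d| + |e| := by
    linarith [abs_sub a b, abs_add_le (a - b) c, abs_add_le (a - b + c) d,
      abs_add_le (a - b + c + d) e]
  rw [wave_identity hu]
  refine (tri _ _ _ _ _).trans ?_
  simp only [abs_mul, abs_of_nonneg ht, abs_pow, abs_norm, abs_two]
  nlinarith [mul_le_mul_of_nonneg_left hS ht, mul_le_mul_of_nonneg_left hO ht,
    mul_le_mul_of_nonneg_left hU ht, mul_le_mul_of_nonneg_left hSt (sq_nonneg ‖y‖),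
    mul_nonneg (mul_nonneg ht ht) (mul_nonneg (norm_nonneg y) (abs_nonneg (Box u t y))),
    mul_nonneg hG (sq_nonneg ‖y‖), mul_nonneg hG' (sq_nonneg ‖y‖), mul_nonneg hM0 (sq_nonneg ‖y‖)]

theorem abs_sub_mul_Dt_DrT_le {u : STF} (hu : ContDiff ℝ 2 (uncurry u)) {t : ℝ} {y : Pt}
    (ht : 0 ≤ t) (hy : 0 < ‖y‖) {G G' M : ℝ}
    (hSt : |Dt (fun s z => Sc u s z - u s z) t y| ≤ G)
    (hSx : ∀ j, |Dsp j (fun s z => Sc u s z - u s z) t y| ≤ G)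
    (hOm : ∀ k j, |Dsp j (Om k u) t y| ≤ G') (hM : ∀ j, |Dsp j u t y| ≤ M) :
    |t - ‖y‖| * |Dt (DrT u) t y| ≤ 3 * G + 6 * G' + 6 * M + t * |Box u t y| := by
  have hrL : ‖y‖ * Dt (DrT u) t y = ∑ j, y j * Dt (Dsp j u) t y := by
    rw [Dt_DrT hu, mul_sum]
    exact sum_congr rfl fun j _ => by field_simp
  refine le_of_mul_le_mul_right ?_ (by positivity : 0 < ‖y‖ * (t + ‖y‖))
  calc |t - ‖y‖| * |Dt (DrT u) t y| * (‖y‖ * (t + ‖y‖))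
      = |(t ^ 2 - ‖y‖ ^ 2) * ∑ j, y j * Dt (Dsp j u) t y| := by
        rw [← hrL, show t ^ 2 - ‖y‖ ^ 2 = (t - ‖y‖) * (t + ‖y‖) by ring, abs_mul, abs_mul,
          abs_mul, abs_norm, abs_of_pos (by positivity : 0 < t + ‖y‖)]
        ring
    _ ≤ _ := abs_wave_identity_le hu ht hSt hSx hOm hM

section VectorField

variable {Y : STV}

theorem Dsp_OmT (hY : ∀ i, ContDiff ℝ 2 (uncurry fun s z => Y s z i)) (k i j : Fin 3) (t : ℝ)
    (y : Pt) :
    Dsp j (fun s z => OmT k Y s z i) t y =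
      Dsp j (Om k fun s z => Y s z i) t y + ∑ m, Umat k i m * Dsp j (fun s z => Y s z m) t y := by
  have h m := differentiable_of_uncurry_space ((hY m).differentiable two_ne_zero) t
  have hx l := differentiable_of_uncurry_space (differentiable_Dsp (hY i) l) t
  have hOm : Differentiable ℝ (fun z => Om k (fun s z => Y s z i) t z) := by
    unfold Om
    fun_prop
  show fderiv ℝ (fun z => Om k (fun s z => Y s z i) t z + ∑ m, Umat k i m * Y t z m) y _ = _
  rw [fderiv_fun_add (by fun_prop) (by fun_prop), fderiv_fun_sum fun m _ => by fun_prop]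
  simp [fderiv_const_mul ((h _).differentiableAt), Dsp, pd]

theorem abs_Umat_le_one (k i m : Fin 3) : |Umat k i m| ≤ 1 := by
  fin_cases k <;> fin_cases i <;> fin_cases m <;> norm_num [Umat]

theorem abs_Dsp_Om_le (hY : ∀ i, ContDiff ℝ 2 (uncurry fun s z => Y s z i)) (k i j : Fin 3)
    (t : ℝ) (y : Pt) :
    |Dsp j (Om k fun s z => Y s z i) t y| ≤ d1Norm (OmT k Y) t y + 3 * d1Norm Y t y := by
  rw [eq_sub_of_add_eq (Dsp_OmT hY k i j t y).symm]
  refine (abs_sub _ _).trans (add_le_add (abs_Dsp_le_d1Norm _ t y j i) ?_)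
  refine (abs_sum_le_card_mul (K := d1Norm Y t y) fun m => ?_).trans_eq (by simp)
  rw [abs_mul]
  exact (mul_le_of_le_one_left (abs_nonneg _) (abs_Umat_le_one k i m)).trans
    (abs_Dsp_le_d1Norm Y t y j m)

theorem d1Norm_Gen_le_sum (t : ℝ) (y : Pt) (z : Fin 7) :
    d1Norm (Gen z Y) t y ≤ ∑ z, d1Norm (Gen z Y) t y :=
  single_le_sum (f := fun z => d1Norm (Gen z Y) t y) (fun _ _ => Real.sqrt_nonneg _) (mem_univ z)

theorem abs_sub_mul_Dt_DrT_component_le (hY : ∀ i, ContDiff ℝ 2 (uncurry fun s z => Y s z i))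
    {t : ℝ} {y : Pt} (ht : 0 ≤ t) (hy : 0 < ‖y‖) (i : Fin 3) :
    |t - ‖y‖| * |Dt (DrT fun s z => Y s z i) t y| ≤
      9 * ∑ z, d1Norm (Gen z Y) t y + 24 * d1Norm Y t y
        + t * |Box (fun s z => Y s z i) t y| := by
  have hS : d1Norm (ScT Y) t y ≤ ∑ z, d1Norm (Gen z Y) t y := d1Norm_Gen_le_sum t y 6
  have hO (k : Fin 3) : d1Norm (OmT k Y) t y ≤ ∑ z, d1Norm (Gen z Y) t y := by
    fin_cases k
    exacts [d1Norm_Gen_le_sum t y 3, d1Norm_Gen_le_sum t y 4, d1Norm_Gen_le_sum t y 5]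
  refine (abs_sub_mul_Dt_DrT_le (hY i) ht hy (G' := ∑ z, d1Norm (Gen z Y) t y + 3 * d1Norm Y t y)
    ((abs_Dt_le_d1Norm _ t y i).trans hS) (fun j => (abs_Dsp_le_d1Norm _ t y j i).trans hS)
    (fun k j => (abs_Dsp_Om_le hY k i j t y).trans (by linarith [hO k]))
    (fun j => abs_Dsp_le_d1Norm Y t y j i)).trans_eq ?_
  ring

end VectorField

theorem weighted_dtdr_estimate :
    ∃ C : ℝ, 0 < C ∧
      ∀ Y : STV,
        (∀ i, ContDiff ℝ (⊤ : ℕ∞) fun q : ℝ × Pt => Y q.1 q.2 i) →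
        ∀ (t : ℝ) (y : Pt), 0 ≤ t → 0 < ‖y‖ →
          |t - ‖y‖| * Real.sqrt (∑ i, (Dt (DrT (fun s z => Y s z i)) t y)^2) ≤
            C * (d1Norm Y t y + (∑ z : Fin 7, d1Norm (Gen z Y) t y)
                + t * Real.sqrt (∑ i, (Box (fun s z => Y s z i) t y)^2)) := by
  refine ⟨72, by norm_num, fun Y hY t y ht hy => ?_⟩
  have hY2 (i : Fin 3) : ContDiff ℝ 2 (uncurry fun s z => Y s z i) :=
    (hY i).of_le (WithTop.coe_le_coe.mpr le_top)
  have hG : 0 ≤ ∑ z, d1Norm (Gen z Y) t y := sum_nonneg fun _ _ => Real.sqrt_nonneg _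
  have hM : 0 ≤ d1Norm Y t y := Real.sqrt_nonneg _
  have hN : 0 ≤ t * √(∑ i, Box (fun s z => Y s z i) t y ^ 2) := by positivity
  calc |t - ‖y‖| * √(∑ i, Dt (DrT fun s z => Y s z i) t y ^ 2)
      ≤ ∑ i, |t - ‖y‖| * |Dt (DrT fun s z => Y s z i) t y| := by
        rw [← mul_sum]
        exact mul_le_mul_of_nonneg_left (sqrt_sum_sq_le_sum_abs _) (abs_nonneg _)
    _ ≤ ∑ _i : Fin 3, (9 * ∑ z, d1Norm (Gen z Y) t y + 24 * d1Norm Y t y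
          + t * √(∑ i, Box (fun s z => Y s z i) t y ^ 2)) :=
        sum_le_sum fun i _ => (abs_sub_mul_Dt_DrT_component_le hY2 ht hy i).trans <| by
          gcongr
          exact abs_le_sqrt_sum_sq (fun i => Box (fun s z => Y s z i) t y) i
    _ ≤ _ := by
        simp only [sum_const, card_univ, Fintype.card_fin, nsmul_eq_mul, Nat.cast_ofNat]
        linarith

end Stmt15
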